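/- arXiv:2504.05635 — 3 statements merged into one kernel-verified Lean document; each statement's English description precedes it below -/
import Mathlib

section
/- Let n ≥ 1, and let μ, β be real numbers with μ < n and n < β + μ. Then there is a constant C (depending on n, μ, β) such that for all x ∈ ℝⁿ: ∫_{ℝⁿ} (1+|y|)^{-β} |x−y|^{-μ} dy ≤ C·(1+|x|)^{n−β−μ} if β < n, and ∫_{ℝⁿ} (1+|y|)^{-β} |x−y|^{-μ} dy ≤ C·(1+|x|)^{−μ} if β > n. -/
/-!
Write `⟨x⟩ = 1 + ‖x‖`. If `μ ≤ 0`, then `‖x - y‖ ≤ ⟨x⟩⟨y⟩` bounds the integrand by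
`⟨x⟩^{-μ} ⟨y⟩^{-(β+μ)}`, which is integrable in `y` since `β + μ > n`. If `μ > 0`, split the
domain into `A = B(x, ⟨x⟩/2)`, the rest of `B(0, 2⟨x⟩)`, and the exterior of `B(0, 2⟨x⟩)`.
On `A` one has `⟨y⟩ ≥ ⟨x⟩/2`, and `∫_A ‖x - y‖^{-μ} ≈ ⟨x⟩^{n-μ}`. Off `A`, `‖x - y‖ ≥ ⟨x⟩/2`,
so what remains is `⟨x⟩^{-μ} ∫ ⟨y⟩^{-β}`: over all of `ℝⁿ` this integral is finite if `β > n`; over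
`B(0, 2⟨x⟩)` it is `≲ ⟨x⟩^{n-β}` if `β < n`. Outside `B(0, 2⟨x⟩)`, `‖x - y‖ ≥ ‖y‖/2`, and
`∫_{‖y‖ ≥ 2⟨x⟩} ‖y‖^{-(β+μ)} ≈ ⟨x⟩^{n-β-μ}`. Polar coordinates give all of the radial integrals.
-/

open MeasureTheory Measure Set Metric Module
open scoped ENNReal

section BracketBound

variable {E : Type*} [SeminormedAddGroup E]

def BoundedByBracketRpow (F : E → ℝ≥0∞) (e : ℝ) : Prop :=
  ∃ C ≠ ∞, ∀ x, F x ≤ C * ENNReal.ofReal ((1 + ‖x‖) ^ e)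

namespace BoundedByBracketRpow

variable {F G : E → ℝ≥0∞} {e e' : ℝ}

theorem mono (hG : BoundedByBracketRpow G e) (hFG : ∀ x, F x ≤ G x) :
    BoundedByBracketRpow F e :=
  let ⟨C, hC, h⟩ := hG
  ⟨C, hC, fun x => (hFG x).trans (h x)⟩

theorem add (hF : BoundedByBracketRpow F e) (hG : BoundedByBracketRpow G e) :
    BoundedByBracketRpow (F + G) e :=
  let ⟨C, hC, hF⟩ := hF
  let ⟨D, hD, hG⟩ := hG
  ⟨C + D, ENNReal.add_ne_top.2 ⟨hC, hD⟩, fun x =>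
    (add_le_add (hF x) (hG x)).trans_eq (add_mul _ _ _).symm⟩

theorem mono_exponent (hF : BoundedByBracketRpow F e) (he : e ≤ e') : BoundedByBracketRpow F e' :=
  let ⟨C, hC, h⟩ := hF
  ⟨C, hC, fun x => (h x).trans <| by gcongr; exact le_add_of_nonneg_right (norm_nonneg x)⟩

theorem exists_integral_le {α : Type*} [MeasurableSpace α] {m : Measure α} {f : E → α → ℝ}
    (h : BoundedByBracketRpow (fun x => ∫⁻ y, ENNReal.ofReal (f x y) ∂m) e)
    (hf : ∀ x y, 0 ≤ f x y) (hfm : ∀ x, AEStronglyMeasurable (f x) m) :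
    ∃ C : ℝ, 0 < C ∧ ∀ x, ∫ y, f x y ∂m ≤ C * (1 + ‖x‖) ^ e := by
  obtain ⟨K, hK, h⟩ := h
  refine ⟨K.toReal + 1, by positivity, fun x => ?_⟩
  rw [integral_eq_lintegral_of_nonneg_ae (.of_forall (hf x)) (hfm x)]
  calc (∫⁻ y, ENNReal.ofReal (f x y) ∂m).toReal
      ≤ (K * ENNReal.ofReal ((1 + ‖x‖) ^ e)).toReal := ENNReal.toReal_mono (by finiteness) (h x)
    _ = K.toReal * (1 + ‖x‖) ^ e := by
        rw [ENNReal.toReal_mul, ENNReal.toReal_ofReal (by positivity)]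
    _ ≤ (K.toReal + 1) * (1 + ‖x‖) ^ e := by gcongr; linarith

end BoundedByBracketRpow

end BracketBound

theorem ENNReal.ofReal_rpow_mul_ofReal_rpow {r : ℝ} (hr : 0 < r) (a b : ℝ) :
    ENNReal.ofReal (r ^ a) * ENNReal.ofReal (r ^ b) = ENNReal.ofReal (r ^ (a + b)) := by
  rw [← ENNReal.ofReal_mul (by positivity), Real.rpow_add hr]

theorem ENNReal.ofReal_mul_rpow {a b : ℝ} (ha : 0 ≤ a) (hb : 0 ≤ b) (e : ℝ) :
    ENNReal.ofReal ((a * b) ^ e) = ENNReal.ofReal (a ^ e) * ENNReal.ofReal (b ^ e) := by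
  rw [Real.mul_rpow ha hb, ENNReal.ofReal_mul (by positivity)]

section Polar

variable {E : Type*} [NormedAddCommGroup E] [NormedSpace ℝ E] [MeasurableSpace E] [BorelSpace E]
  [FiniteDimensional ℝ E] [Nontrivial E] (ν : Measure E) [ν.IsAddHaarMeasure]

theorem lintegral_comp_norm_addHaar {f : ℝ → ℝ≥0∞} (hf : Measurable f) :
    ∫⁻ x, f ‖x‖ ∂ν =
      ν.toSphere univ * ∫⁻ t in Ioi 0, ENNReal.ofReal (t ^ (finrank ℝ E - 1)) * f t := by
  have hf' : Measurable fun p : sphere (0 : E) 1 × Ioi (0 : ℝ) => f p.2 :=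
    hf.comp (measurable_subtype_coe.comp measurable_snd)
  calc ∫⁻ x, f ‖x‖ ∂ν
      = ∫⁻ x : ({0}ᶜ : Set E), f ‖(x : E)‖ ∂(ν.comap (↑)) := by
        rw [lintegral_subtype_comap (measurableSet_singleton 0).compl fun x => f ‖x‖,
          restrict_compl_singleton]
    _ = ∫⁻ p : sphere (0 : E) 1 × Ioi (0 : ℝ), f p.2
          ∂ν.toSphere.prod (volumeIoiPow (finrank ℝ E - 1)) := by
        simpa only [Function.comp_def, homeomorphUnitSphereProd_apply_snd_coe, div_one] using
          ν.measurePreserving_homeomorphUnitSphereProd.lintegral_comp hf'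
    _ = ν.toSphere univ * ∫⁻ t : Ioi (0 : ℝ), f t ∂volumeIoiPow (finrank ℝ E - 1) := by
        rw [lintegral_prod _ hf'.aemeasurable]
        simp [lintegral_const, mul_comm]
    _ = _ := by
        rw [volumeIoiPow, lintegral_withDensity_eq_lintegral_mul _
          (measurable_subtype_coe.pow_const _).ennreal_ofReal
          (g := fun t : Ioi (0 : ℝ) => f t) (hf.comp measurable_subtype_coe)]
        congr 1
        exact lintegral_subtype_comap measurableSet_Ioi
          fun t => ENNReal.ofReal (t ^ (finrank ℝ E - 1)) * f t

theorem setLIntegral_norm_preimage_rpow {s : Set ℝ} (hs : MeasurableSet s) (a : ℝ) :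
    ∫⁻ x in (‖·‖) ⁻¹' s, ENNReal.ofReal (‖x‖ ^ (-a)) ∂ν =
      ν.toSphere univ * ∫⁻ t in s ∩ Ioi 0, ENNReal.ofReal (t ^ ((finrank ℝ E : ℝ) - 1 - a)) := by
  have hg : Measurable fun t : ℝ => ENNReal.ofReal (t ^ (-a)) := by fun_prop
  rw [← lintegral_indicator (hs.preimage measurable_norm)]
  have hcomp : ∀ x : E, ((‖·‖) ⁻¹' s).indicator (fun x => ENNReal.ofReal (‖x‖ ^ (-a))) x =
      s.indicator (fun t => ENNReal.ofReal (t ^ (-a))) ‖x‖ := fun x =>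
    indicator_comp_right (g := fun t => ENNReal.ofReal (t ^ (-a))) (‖·‖)
  simp_rw [hcomp]
  rw [lintegral_comp_norm_addHaar ν (hg.indicator hs)]
  congr 1
  simp_rw [← indicator_mul_right s fun t : ℝ => ENNReal.ofReal (t ^ (finrank ℝ E - 1))]
  rw [lintegral_indicator hs, restrict_restrict hs]
  refine setLIntegral_congr_fun (hs.inter measurableSet_Ioi) fun t ht => ?_
  have ht0 : 0 < t := ht.2
  rw [← ENNReal.ofReal_mul (by positivity), ← Real.rpow_natCast, ← Real.rpow_add ht0,
    Nat.cast_sub finrank_pos, Nat.cast_one, sub_eq_add_neg _ a]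

theorem setLIntegral_norm_rpow_ball {a r : ℝ} (ha : a < finrank ℝ E) (hr : 0 ≤ r) :
    ∫⁻ x in ball 0 r, ENNReal.ofReal (‖x‖ ^ (-a)) ∂ν =
      ν.toSphere univ * ENNReal.ofReal (r ^ ((finrank ℝ E : ℝ) - a) / ((finrank ℝ E : ℝ) - a)) := by
  have hs : -1 < (finrank ℝ E : ℝ) - 1 - a := by linarith
  have he : (finrank ℝ E : ℝ) - 1 - a + 1 = finrank ℝ E - a := by ring
  have hball : ball (0 : E) r = (‖·‖) ⁻¹' Iio r := by ext; simp
  rw [hball, setLIntegral_norm_preimage_rpow ν measurableSet_Iio, Iio_inter_Ioi,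
    ← ofReal_integral_eq_lintegral_ofReal
      ((intervalIntegral.intervalIntegrable_rpow' hs).1.mono_set Ioo_subset_Ioc_self)
      (ae_restrict_of_forall_mem measurableSet_Ioo fun t ht => Real.rpow_nonneg ht.1.le _),
    restrict_congr_set Ioo_ae_eq_Ioc, ← intervalIntegral.integral_of_le hr,
    integral_rpow (Or.inl hs), he, Real.zero_rpow (by linarith), sub_zero]

theorem setLIntegral_norm_rpow_compl_ball {a r : ℝ} (ha : finrank ℝ E < a) (hr : 0 < r) :
    ∫⁻ x in (ball 0 r)ᶜ, ENNReal.ofReal (‖x‖ ^ (-a)) ∂ν =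
      ν.toSphere univ * ENNReal.ofReal (r ^ ((finrank ℝ E : ℝ) - a) / (a - finrank ℝ E)) := by
  have hs : (finrank ℝ E : ℝ) - 1 - a < -1 := by linarith
  have he : (finrank ℝ E : ℝ) - 1 - a + 1 = finrank ℝ E - a := by ring
  have hball : (ball (0 : E) r)ᶜ = (‖·‖) ⁻¹' Ici r := by ext; simp
  rw [hball, setLIntegral_norm_preimage_rpow ν measurableSet_Ici,
    inter_eq_left.2 (Ici_subset_Ioi.2 hr), restrict_congr_set Ioi_ae_eq_Ici.symm,
    ← ofReal_integral_eq_lintegral_ofReal (integrableOn_Ioi_rpow_of_lt hs hr)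
      (ae_restrict_of_forall_mem measurableSet_Ioi fun t ht => Real.rpow_nonneg (hr.trans ht).le _),
    integral_Ioi_rpow_of_lt hs hr, he, neg_div, ← div_neg, neg_sub]

theorem setLIntegral_norm_sub_rpow_ball (x : E) {a r : ℝ} (ha : a < finrank ℝ E) (hr : 0 ≤ r) :
    ∫⁻ y in ball x r, ENNReal.ofReal (‖x - y‖ ^ (-a)) ∂ν =
      ν.toSphere univ * ENNReal.ofReal (r ^ ((finrank ℝ E : ℝ) - a) / ((finrank ℝ E : ℝ) - a)) := by
  have hball : ball x r = (x - ·) ⁻¹' ball 0 r := by ext; simp [dist_eq_norm, norm_sub_rev]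
  rw [hball, (measurePreserving_sub_left ν x).setLIntegral_comp_preimage measurableSet_ball
    (f := fun z => ENNReal.ofReal (‖z‖ ^ (-a))) (by fun_prop), setLIntegral_norm_rpow_ball ν ha hr]

theorem setLIntegral_one_add_norm_rpow_ball_le {β : ℝ} (hβ : 0 ≤ β) (hβd : β < finrank ℝ E) {r : ℝ}
    (hr : 0 ≤ r) :
    ∫⁻ y in ball 0 r, ENNReal.ofReal ((1 + ‖y‖) ^ (-β)) ∂ν ≤
      ν.toSphere univ * ENNReal.ofReal (r ^ ((finrank ℝ E : ℝ) - β) / (finrank ℝ E - β)) := by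
  rw [← setLIntegral_norm_rpow_ball ν hβd hr]
  -- only a.e.: at `y = 0` the right side is the junk value `0 ^ (-β) = 0` (for `β ≠ 0`)
  refine setLIntegral_mono_ae (by fun_prop) ?_
  filter_upwards [ν.ae_ne 0] with y hy _
  exact ENNReal.ofReal_le_ofReal <| Real.rpow_le_rpow_of_nonpos (norm_pos_iff.2 hy)
    (le_add_of_nonneg_left zero_le_one) (neg_nonpos.2 hβ)

end Polar

theorem setLIntegral_compl_ball_inter_le {E : Type*} [NormedAddCommGroup E] [MeasurableSpace E]
    [BorelSpace E] {m : Measure E} (x : E) {β μ : ℝ} (hμ : 0 ≤ μ) {r : ℝ} (hr : 0 < r) (s : Set E) :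
∫⁻ y in (ball x r)ᶜ ∩ s, ENNReal.ofReal ((1 + ‖y‖) ^ (-β) * ‖x - y‖ ^ (-μ)) ∂m ≤
      ENNReal.ofReal (r ^ (-μ)) * ∫⁻ y in s, ENNReal.ofReal ((1 + ‖y‖) ^ (-β)) ∂m := by
  rw [← lintegral_const_mul _ (by fun_prop)]
  calc _ ≤ ∫⁻ y in (ball x r)ᶜ ∩ s,
        ENNReal.ofReal (r ^ (-μ)) * ENNReal.ofReal ((1 + ‖y‖) ^ (-β)) ∂m := by
        refine setLIntegral_mono (by fun_prop) fun y hy => ?_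
        have hxy : r ≤ ‖x - y‖ := by simpa [dist_eq_norm, norm_sub_rev] using hy.1
        rw [← ENNReal.ofReal_mul (by positivity), mul_comm]
        exact ENNReal.ofReal_le_ofReal <| mul_le_mul_of_nonneg_right
          (Real.rpow_le_rpow_of_nonpos hr hxy (neg_nonpos.2 hμ)) (by positivity)
    _ ≤ _ := lintegral_mono_set inter_subset_right

section Kernel

variable {E : Type*} [NormedAddCommGroup E] [NormedSpace ℝ E] [MeasurableSpace E] [BorelSpace E]
  [FiniteDimensional ℝ E] (ν : Measure E) [ν.IsAddHaarMeasure] {β μ : ℝ}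

theorem boundedByBracketRpow_lintegral_of_nonpos (hμ : μ ≤ 0) (hβμ : finrank ℝ E < β + μ) :
    BoundedByBracketRpow (fun x => ∫⁻ y,
      ENNReal.ofReal ((1 + ‖y‖) ^ (-β) * ‖x - y‖ ^ (-μ)) ∂ν) (-μ) := by
  refine ⟨∫⁻ y, ENNReal.ofReal ((1 + ‖y‖) ^ (-(β + μ))) ∂ν,
    (finite_integral_one_add_norm hβμ).ne, fun x => ?_⟩
  rw [mul_comm, ← lintegral_const_mul _ (by fun_prop)]
  refine lintegral_mono fun y => ?_
  rw [← ENNReal.ofReal_mul (by positivity)]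
  refine ENNReal.ofReal_le_ofReal ?_
  have hxy : ‖x - y‖ ≤ (1 + ‖x‖) * (1 + ‖y‖) := by
    nlinarith [norm_sub_le x y, norm_nonneg x, norm_nonneg y]
  calc (1 + ‖y‖) ^ (-β) * ‖x - y‖ ^ (-μ)
      ≤ (1 + ‖y‖) ^ (-β) * ((1 + ‖x‖) * (1 + ‖y‖)) ^ (-μ) := by
        gcongr
        linarith
    _ = (1 + ‖x‖) ^ (-μ) * (1 + ‖y‖) ^ (-(β + μ)) := by
        rw [Real.mul_rpow (by positivity) (by positivity), neg_add, Real.rpow_add (by positivity)]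
        ring

theorem boundedByBracketRpow_setLIntegral_compl_ball_self (hμ : 0 ≤ μ) (hβ : finrank ℝ E < β) :
    BoundedByBracketRpow (fun x => ∫⁻ y in (ball x (2⁻¹ * (1 + ‖x‖)))ᶜ,
      ENNReal.ofReal ((1 + ‖y‖) ^ (-β) * ‖x - y‖ ^ (-μ)) ∂ν) (-μ) := by
  refine ⟨ENNReal.ofReal ((2⁻¹ : ℝ) ^ (-μ)) * ∫⁻ y, ENNReal.ofReal ((1 + ‖y‖) ^ (-β)) ∂ν,
    ENNReal.mul_ne_top ENNReal.ofReal_ne_top (finite_integral_one_add_norm hβ).ne, fun x => ?_⟩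
  calc _ ≤ ENNReal.ofReal ((2⁻¹ * (1 + ‖x‖)) ^ (-μ)) *
        ∫⁻ y in univ, ENNReal.ofReal ((1 + ‖y‖) ^ (-β)) ∂ν := by
        simpa only [inter_univ] using setLIntegral_compl_ball_inter_le x hμ (by positivity) univ
    _ = _ := by
        rw [setLIntegral_univ, ENNReal.ofReal_mul_rpow (by norm_num) (by positivity)]
        ring

variable [Nontrivial E]

theorem boundedByBracketRpow_setLIntegral_ball_self (hβ : 0 ≤ β) (hμ : μ < finrank ℝ E) :
    BoundedByBracketRpow (fun x => ∫⁻ y in ball x (2⁻¹ * (1 + ‖x‖)),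
      ENNReal.ofReal ((1 + ‖y‖) ^ (-β) * ‖x - y‖ ^ (-μ)) ∂ν) (finrank ℝ E - β - μ) := by
  refine ⟨ν.toSphere univ * ENNReal.ofReal ((finrank ℝ E - μ)⁻¹) *
    ENNReal.ofReal ((2⁻¹ : ℝ) ^ ((finrank ℝ E : ℝ) - β - μ)), by finiteness, fun x => ?_⟩
  set r := 2⁻¹ * (1 + ‖x‖) with hr_def
  have hr : 0 < r := by positivity
  calc _ ≤ ∫⁻ y in ball x r, ENNReal.ofReal (r ^ (-β)) * ENNReal.ofReal (‖x - y‖ ^ (-μ)) ∂ν := by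
        refine setLIntegral_mono (by fun_prop) fun y hy => ?_
        have hry : r ≤ 1 + ‖y‖ := by
          have := norm_sub_norm_le x y
          rw [mem_ball, dist_eq_norm, norm_sub_rev] at hy
          linarith
        rw [← ENNReal.ofReal_mul (by positivity)]
        exact ENNReal.ofReal_le_ofReal <| mul_le_mul_of_nonneg_right
          (Real.rpow_le_rpow_of_nonpos hr hry (neg_nonpos.2 hβ)) (by positivity)
    _ = ENNReal.ofReal (r ^ (-β)) * (ν.toSphere univ *
          ENNReal.ofReal (r ^ ((finrank ℝ E : ℝ) - μ) * (finrank ℝ E - μ)⁻¹)) := by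
        rw [lintegral_const_mul _ (by fun_prop), setLIntegral_norm_sub_rpow_ball ν x hμ hr.le,
          div_eq_mul_inv]
    _ = _ := by
        rw [ENNReal.ofReal_mul (by positivity),
          show (finrank ℝ E : ℝ) - β - μ = -β + (finrank ℝ E - μ) by ring, hr_def, ENNReal.ofReal_mul_rpow (by norm_num) (by positivity),
          ENNReal.ofReal_mul_rpow (by norm_num) (by positivity),
          ← ENNReal.ofReal_rpow_mul_ofReal_rpow (by positivity : (0 : ℝ) < 1 + ‖x‖),
          ← ENNReal.ofReal_rpow_mul_ofReal_rpow (by norm_num : (0 : ℝ) < 2⁻¹)]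
        ring

theorem boundedByBracketRpow_setLIntegral_compl_ball_self_inter_ball (hμ : 0 ≤ μ)
    (hβ : 0 ≤ β) (hβd : β < finrank ℝ E) :
    BoundedByBracketRpow (fun x => ∫⁻ y in (ball x (2⁻¹ * (1 + ‖x‖)))ᶜ ∩ ball 0 (2 * (1 + ‖x‖)),
      ENNReal.ofReal ((1 + ‖y‖) ^ (-β) * ‖x - y‖ ^ (-μ)) ∂ν) (finrank ℝ E - β - μ) := by
  refine ⟨ENNReal.ofReal ((2⁻¹ : ℝ) ^ (-μ)) * ν.toSphere univ *
    ENNReal.ofReal ((finrank ℝ E - β)⁻¹) * ENNReal.ofReal ((2 : ℝ) ^ ((finrank ℝ E : ℝ) - β)),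
    by finiteness, fun x => ?_⟩
  have hR : 0 < 1 + ‖x‖ := by positivity
  calc _ ≤ ENNReal.ofReal ((2⁻¹ * (1 + ‖x‖)) ^ (-μ)) *
        ∫⁻ y in ball 0 (2 * (1 + ‖x‖)), ENNReal.ofReal ((1 + ‖y‖) ^ (-β)) ∂ν :=
        setLIntegral_compl_ball_inter_le x hμ (by positivity) _
    _ ≤ ENNReal.ofReal ((2⁻¹ * (1 + ‖x‖)) ^ (-μ)) * (ν.toSphere univ *
        ENNReal.ofReal ((2 * (1 + ‖x‖)) ^ ((finrank ℝ E : ℝ) - β) * (finrank ℝ E - β)⁻¹)) := by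
        rw [← div_eq_mul_inv]
        gcongr
        exact setLIntegral_one_add_norm_rpow_ball_le ν hβ hβd (by positivity)
    _ = _ := by
        rw [ENNReal.ofReal_mul (by positivity), ENNReal.ofReal_mul_rpow (by norm_num) hR.le,
          ENNReal.ofReal_mul_rpow (by norm_num) hR.le,
          show (finrank ℝ E : ℝ) - β - μ = -μ + (finrank ℝ E - β) by ring,
          ← ENNReal.ofReal_rpow_mul_ofReal_rpow hR]
        ring

theorem boundedByBracketRpow_setLIntegral_compl_ball_zero (hμ : 0 ≤ μ) (hβ : 0 ≤ β)
    (hβμ : finrank ℝ E < β + μ) :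
    BoundedByBracketRpow (fun x => ∫⁻ y in (ball 0 (2 * (1 + ‖x‖)))ᶜ,
      ENNReal.ofReal ((1 + ‖y‖) ^ (-β) * ‖x - y‖ ^ (-μ)) ∂ν) (finrank ℝ E - β - μ) := by
  refine ⟨ENNReal.ofReal ((2 : ℝ) ^ μ) * ν.toSphere univ *
    ENNReal.ofReal ((β + μ - finrank ℝ E)⁻¹) *
    ENNReal.ofReal ((2 : ℝ) ^ ((finrank ℝ E : ℝ) - β - μ)), by finiteness, fun x => ?_⟩
  set ρ := 2 * (1 + ‖x‖) with hρ_def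
  have hR : 0 < 1 + ‖x‖ := by positivity
  have hρ : 0 < ρ := by positivity
  calc _ ≤ ∫⁻ y in (ball 0 ρ)ᶜ, ENNReal.ofReal (2 ^ μ) * ENNReal.ofReal (‖y‖ ^ (-(β + μ))) ∂ν := by
        refine setLIntegral_mono (by fun_prop) fun y hy => ?_
        have hρy : ρ ≤ ‖y‖ := by simpa using hy
        have hy0 : 0 < ‖y‖ := hρ.trans_le hρy
        have hxy : 2⁻¹ * ‖y‖ ≤ ‖x - y‖ := by
          have := norm_sub_norm_le y x
          rw [norm_sub_rev] at this
          linarith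
        rw [← ENNReal.ofReal_mul (by positivity)]
        refine ENNReal.ofReal_le_ofReal ?_
        calc (1 + ‖y‖) ^ (-β) * ‖x - y‖ ^ (-μ) ≤ ‖y‖ ^ (-β) * (2⁻¹ * ‖y‖) ^ (-μ) :=
              mul_le_mul (Real.rpow_le_rpow_of_nonpos hy0 (by linarith) (neg_nonpos.2 hβ))
                (Real.rpow_le_rpow_of_nonpos (by positivity) hxy (neg_nonpos.2 hμ))
                (by positivity) (by positivity)
          _ = 2 ^ μ * ‖y‖ ^ (-(β + μ)) := by
              rw [Real.mul_rpow (by norm_num) hy0.le, Real.inv_rpow zero_le_two,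
                ← Real.rpow_neg zero_le_two, neg_neg, neg_add, Real.rpow_add hy0]
              ring
    _ = ENNReal.ofReal (2 ^ μ) * (ν.toSphere univ *
          ENNReal.ofReal (ρ ^ ((finrank ℝ E : ℝ) - (β + μ)) * (β + μ - finrank ℝ E)⁻¹)) := by
        rw [lintegral_const_mul _ (by fun_prop), setLIntegral_norm_rpow_compl_ball ν hβμ hρ,
          div_eq_mul_inv]
    _ = _ := by
        rw [ENNReal.ofReal_mul (by positivity), hρ_def, ENNReal.ofReal_mul_rpow (by norm_num) hR.le,
          show (finrank ℝ E : ℝ) - (β + μ) = finrank ℝ E - β - μ by ring]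
        ring

theorem boundedByBracketRpow_lintegral_of_lt (hμ : μ < finrank ℝ E) (hβμ : finrank ℝ E < β + μ)
    (hβ : β < finrank ℝ E) :
    BoundedByBracketRpow (fun x => ∫⁻ y,
      ENNReal.ofReal ((1 + ‖y‖) ^ (-β) * ‖x - y‖ ^ (-μ)) ∂ν) (finrank ℝ E - β - μ) := by
  rcases le_or_gt μ 0 with hμ0 | hμ0
  · exact (boundedByBracketRpow_lintegral_of_nonpos ν hμ0 hβμ).mono_exponent (by linarith)
  have hβ0 : 0 ≤ β := by linarith
  refine (((boundedByBracketRpow_setLIntegral_ball_self ν hβ0 hμ).add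
    (boundedByBracketRpow_setLIntegral_compl_ball_self_inter_ball ν hμ0.le hβ0 hβ)).add
    (boundedByBracketRpow_setLIntegral_compl_ball_zero ν hμ0.le hβ0 hβμ)).mono fun x => ?_
  set f := fun y => ENNReal.ofReal ((1 + ‖y‖) ^ (-β) * ‖x - y‖ ^ (-μ))
  set A := ball x (2⁻¹ * (1 + ‖x‖))
  set B := ball (0 : E) (2 * (1 + ‖x‖))
  calc ∫⁻ y, f y ∂ν
      = ∫⁻ y in A, f y ∂ν + (∫⁻ y in Aᶜ ∩ B, f y ∂ν + ∫⁻ y in Aᶜ \ B, f y ∂ν) := by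
        rw [lintegral_inter_add_sdiff _ _ measurableSet_ball,
          lintegral_add_compl _ measurableSet_ball]
    _ ≤ ∫⁻ y in A, f y ∂ν + (∫⁻ y in Aᶜ ∩ B, f y ∂ν + ∫⁻ y in Bᶜ, f y ∂ν) := by
        gcongr
        exact sdiff_subset_compl _ _
    _ = _ := (add_assoc _ _ _).symm

theorem boundedByBracketRpow_lintegral_of_gt (hμ : μ < finrank ℝ E) (hβμ : finrank ℝ E < β + μ)
    (hβ : finrank ℝ E < β) :
    BoundedByBracketRpow (fun x => ∫⁻ y,
      ENNReal.ofReal ((1 + ‖y‖) ^ (-β) * ‖x - y‖ ^ (-μ)) ∂ν) (-μ) := by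
  rcases le_or_gt μ 0 with hμ0 | hμ0
  · exact boundedByBracketRpow_lintegral_of_nonpos ν hμ0 hβμ
  refine (((boundedByBracketRpow_setLIntegral_ball_self ν (by linarith) hμ).mono_exponent
    (by linarith)).add (boundedByBracketRpow_setLIntegral_compl_ball_self ν hμ0.le hβ)).mono
    fun x => (lintegral_add_compl _ measurableSet_ball).ge

end Kernel

/-- Hardy-type convolution estimate: for `μ < n` and `n < β + μ`, the integral
`∫ ⟨y⟩^{-β} |x-y|^{-μ} dy` is bounded by `C⟨x⟩^{n-β-μ}` if `β < n` and by `C⟨x⟩^{-μ}` if `β > n`. -/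
theorem statement0 (n : ℕ) (hn : 1 ≤ n) (μ β : ℝ) (hμ : μ < n) (hβμ : (n : ℝ) < β + μ) :
    ∃ C : ℝ, 0 < C ∧ ∀ x : EuclideanSpace ℝ (Fin n),
      (β < n →
        ∫ y : EuclideanSpace ℝ (Fin n), (1 + ‖y‖) ^ (-β) * ‖x - y‖ ^ (-μ)
          ≤ C * (1 + ‖x‖) ^ ((n : ℝ) - β - μ)) ∧
      ((n : ℝ) < β →
        ∫ y : EuclideanSpace ℝ (Fin n), (1 + ‖y‖) ^ (-β) * ‖x - y‖ ^ (-μ)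
          ≤ C * (1 + ‖x‖) ^ (-μ)) := by
  have : Nonempty (Fin n) := ⟨⟨0, hn⟩⟩
  have hd : (finrank ℝ (EuclideanSpace ℝ (Fin n)) : ℝ) = n := by rw [finrank_euclideanSpace_fin]
  have hf (x y : EuclideanSpace ℝ (Fin n)) : 0 ≤ (1 + ‖y‖) ^ (-β) * ‖x - y‖ ^ (-μ) := by positivity
  have hfm (x : EuclideanSpace ℝ (Fin n)) :
      AEStronglyMeasurable (fun y => (1 + ‖y‖) ^ (-β) * ‖x - y‖ ^ (-μ)) volume := by fun_prop
  rw [← hd] at hμ hβμ ⊢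
  rcases lt_trichotomy β (finrank ℝ (EuclideanSpace ℝ (Fin n))) with hβ | hβ | hβ
  · obtain ⟨C, hC, hbound⟩ :=
      (boundedByBracketRpow_lintegral_of_lt volume hμ hβμ hβ).exists_integral_le hf hfm
    exact ⟨C, hC, fun x => ⟨fun _ => hbound x, fun h => absurd h hβ.not_gt⟩⟩
  · exact ⟨1, one_pos, fun x => ⟨fun h => absurd h hβ.not_lt, fun h => absurd h hβ.not_gt⟩⟩
  · obtain ⟨C, hC, hbound⟩ :=
      (boundedByBracketRpow_lintegral_of_gt volume hμ hβμ hβ).exists_integral_le hf hfm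
    exact ⟨C, hC, fun x => ⟨fun h => absurd h hβ.not_gt, fun _ => hbound x⟩⟩
end

section
/- Let n ≥ 1 and, for s > 0 and a unit vector ω ∈ ℝⁿ, define ψ_{sω}(ξ) := (|ξ−ω|² + |ξ|² + s^{−2})^{-1} for ξ ∈ ℝⁿ. Then for every multi-index α there is a constant C_α independent of s ≥ 1 and ω such that |∂_ξ^α ψ_{sω}(ξ)| ≤ C_α (1+|ξ|)^{−2−|α|} for all ξ ∈ ℝⁿ. -/
/-!
Write `ψ = q⁻¹` with `q ζ = ‖ζ - ω‖² + ‖ζ‖² + c`, `c = s⁻² ≥ 0`, and fix `ξ`, `R = 1 + ‖ξ‖`.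
Since `‖ξ - ω‖ + ‖ξ‖ ≥ ‖ω‖ = 1` we get `q ξ ≥ R² / 8`, while `‖Dq ξ‖ ≤ 4R`, `‖D²q‖ ≤ 4` and all
higher derivatives vanish. Hence `q / (R² / 8)` is `≥ 1` at `ξ` with `i`-th derivative at most
`(32 / R)ⁱ`, and Faà di Bruno's bound for `y ↦ y⁻¹`, whose derivatives on `[1, ∞)` are bounded by
`i!`, gives `‖Dᵐψ ξ‖ ≤ 8 · 32ᵐ · (m!)² · R⁻²⁻ᵐ`.
-/

open Set Nat

section Inverse

variable {E : Type*} [NormedAddCommGroup E] [NormedSpace ℝ E]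

theorem norm_iteratedFDeriv_inv_le_factorial {y : ℝ} (hy : 1 ≤ y) (i : ℕ) :
    ‖iteratedFDeriv ℝ i Inv.inv y‖ ≤ i ! := by
  rw [norm_iteratedFDeriv_eq_norm_iteratedDeriv, iteratedDeriv_eq_iterate, iter_deriv_inv,
    norm_mul, norm_mul, norm_pow, norm_neg, norm_one, one_pow, one_mul, norm_natCast]
  have : ‖y ^ (-1 - i : ℤ)‖ ≤ 1 := by
    rw [Real.norm_eq_abs, abs_of_pos (zpow_pos (by linarith) _)]
    exact zpow_le_one_of_nonpos₀ hy (by omega)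
  simpa using mul_le_mul_of_nonneg_left this (Nat.cast_nonneg (i !))

theorem norm_iteratedFDeriv_inv_comp_le {f : E → ℝ} {m : ℕ} (hf : ContDiff ℝ m f)
    (hpos : ∀ y, 0 < f y) {x : E} (hx : 1 ≤ f x) {D : ℝ}
    (hD : ∀ i, 1 ≤ i → i ≤ m → ‖iteratedFDeriv ℝ i f x‖ ≤ D ^ i) :
    ‖iteratedFDeriv ℝ m (fun y => (f y)⁻¹) x‖ ≤ m ! * m ! * D ^ m := by
  have hinv : ∀ i ≤ m, ‖iteratedFDerivWithin ℝ i Inv.inv (Ioi 0) (f x)‖ ≤ m ! := fun i hi => by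
    rw [iteratedFDerivWithin_of_isOpen i isOpen_Ioi (hpos x)]
    exact (norm_iteratedFDeriv_inv_le_factorial hx i).trans (by exact_mod_cast factorial_le hi)
  exact norm_iteratedFDeriv_comp_le' (range_subset_iff.2 hpos) isOpen_Ioi.uniqueDiffOn
    ((contDiffOn_inv ℝ).mono fun _ h => ne_of_gt h) hf le_rfl x hinv hD

theorem norm_iteratedFDeriv_inv_le {f : E → ℝ} {m : ℕ} (hf : ContDiff ℝ m f)
    (hpos : ∀ y, 0 < f y) {x : E} {a D : ℝ} (ha : 0 < a) (hx : a ≤ f x)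
    (hD : ∀ i, 1 ≤ i → i ≤ m → ‖iteratedFDeriv ℝ i f x‖ ≤ a * D ^ i) :
    ‖iteratedFDeriv ℝ m (fun y => (f y)⁻¹) x‖ ≤ m ! * m ! * D ^ m / a := by
  have hg : ContDiff ℝ m fun y => a⁻¹ • f y := hf.const_smul a⁻¹
  have hgD : ∀ i, 1 ≤ i → i ≤ m → ‖iteratedFDeriv ℝ i (fun y => a⁻¹ • f y) x‖ ≤ D ^ i := by
    intro i hi him
    rw [iteratedFDeriv_const_smul_apply' (hf.of_le (by exact_mod_cast him)).contDiffAt, norm_smul,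
      norm_inv, Real.norm_of_nonneg ha.le, inv_mul_le_iff₀ ha]
    exact hD i hi him
  have key := norm_iteratedFDeriv_inv_comp_le hg (fun y => by have := hpos y; positivity)
    (by rwa [smul_eq_mul, le_inv_mul_iff₀ ha, mul_one]) hgD
  have hfun : (fun y => (f y)⁻¹) = fun y => a⁻¹ • (a⁻¹ • f y)⁻¹ := by
    funext y
    simp only [smul_eq_mul, mul_inv, inv_inv, inv_mul_cancel_left₀ ha.ne']
  rw [hfun, iteratedFDeriv_const_smul_apply' (f := fun y => (a⁻¹ • f y)⁻¹) (hg.inv fun y => by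
      have := hpos y; positivity).contDiffAt, norm_smul, norm_inv, Real.norm_of_nonneg ha.le,
    inv_mul_le_iff₀ ha, mul_div_cancel₀ _ ha.ne']
  exact key

end Inverse

section Denominator

variable {E : Type*} [NormedAddCommGroup E]

noncomputable def psiDenom (ω : E) (c : ℝ) (ζ : E) : ℝ := ‖ζ - ω‖ ^ 2 + ‖ζ‖ ^ 2 + c

variable (ω : E) (c : ℝ)

theorem sq_one_add_norm_le_psiDenom (hω : 1 ≤ ‖ω‖) (hc : 0 ≤ c) (ζ : E) :
    (1 + ‖ζ‖) ^ 2 / 8 ≤ psiDenom ω c ζ := by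
  have htri : ‖ω‖ ≤ ‖ζ - ω‖ + ‖ζ‖ := by
    simpa [norm_sub_rev] using norm_sub_le_norm_sub_add_norm_sub ω ζ 0
  unfold psiDenom
  nlinarith [norm_nonneg (ζ - ω), norm_nonneg ζ, sq_nonneg (‖ζ - ω‖ - ‖ζ‖),
    sq_nonneg (‖ζ - ω‖ + ‖ζ‖ - 1)]

variable [InnerProductSpace ℝ E]

theorem contDiff_psiDenom {n : WithTop ℕ∞} : ContDiff ℝ n (psiDenom ω c) :=
  (((contDiff_id.sub contDiff_const).norm_sq ℝ).add (contDiff_id.norm_sq ℝ)).add contDiff_const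

theorem hasFDerivAt_psiDenom (ζ : E) :
    HasFDerivAt (psiDenom ω c) (((4 : ℝ) • innerSL ℝ) ζ - (2 : ℝ) • innerSL ℝ ω) ζ := by
  have h := (((hasFDerivAt_id ζ).sub_const ω).norm_sq.add (hasFDerivAt_id ζ).norm_sq).add_const c
  refine h.congr_fderiv (ContinuousLinearMap.ext fun v => ?_)
  simp only [map_sub, add_apply, smul_apply, sub_apply, coe_innerSL_apply,
    ContinuousLinearMap.comp_id, id_eq, nsmul_eq_mul, smul_eq_mul]
  ring

theorem fderiv_psiDenom :
    fderiv ℝ (psiDenom ω c) = fun ζ => ((4 : ℝ) • innerSL ℝ) ζ - (2 : ℝ) • innerSL ℝ ω :=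
  funext fun ζ => (hasFDerivAt_psiDenom ω c ζ).fderiv

theorem fderiv_fderiv_psiDenom :
    fderiv ℝ (fderiv ℝ (psiDenom ω c)) = fun _ => (4 : ℝ) • innerSL ℝ (E := E) := by
  rw [fderiv_psiDenom]
  exact funext fun ζ => (((4 : ℝ) • innerSL ℝ).hasFDerivAt.sub_const _).fderiv

theorem norm_fderiv_psiDenom_le (ζ : E) :
    ‖fderiv ℝ (psiDenom ω c) ζ‖ ≤ 4 * ‖ζ‖ + 2 * ‖ω‖ := by
  rw [fderiv_psiDenom]
  refine (norm_sub_le _ _).trans (add_le_add ?_ ?_) <;>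
  simp [norm_smul, innerSL_apply_norm]

theorem norm_fderiv_fderiv_psiDenom_le (ζ : E) :
    ‖fderiv ℝ (fderiv ℝ (psiDenom ω c)) ζ‖ ≤ 4 := by
  rw [fderiv_fderiv_psiDenom]
  exact (ContinuousLinearMap.opNorm_smul_le (4 : ℝ) (innerSL ℝ (E := E))).trans
    (by simpa using norm_innerSL_le ℝ)

theorem iteratedFDeriv_psiDenom_eq_zero {i : ℕ} (hi : 3 ≤ i) (ζ : E) :
    iteratedFDeriv ℝ i (psiDenom ω c) ζ = 0 := by
  obtain ⟨k, rfl⟩ := Nat.exists_eq_add_of_le' hi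
  rw [← norm_eq_zero, ← norm_iteratedFDeriv_fderiv, ← norm_iteratedFDeriv_fderiv,
    fderiv_fderiv_psiDenom, iteratedFDeriv_succ_const, Pi.zero_apply, norm_zero]

theorem norm_iteratedFDeriv_psiDenom_le (hω : ‖ω‖ ≤ 1) (ζ : E) {i : ℕ} (hi : 1 ≤ i) :
    ‖iteratedFDeriv ℝ i (psiDenom ω c) ζ‖ ≤ (1 + ‖ζ‖) ^ 2 / 8 * (32 / (1 + ‖ζ‖)) ^ i := by
  have hR : 0 < 1 + ‖ζ‖ := by positivity
  obtain rfl | rfl | hi3 : i = 1 ∨ i = 2 ∨ 3 ≤ i := by omega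
  · have h : (1 + ‖ζ‖) ^ 2 / 8 * (32 / (1 + ‖ζ‖)) ^ 1 = 4 * (1 + ‖ζ‖) := by field_simp; ring
    rw [norm_iteratedFDeriv_one, h]
    linarith [norm_fderiv_psiDenom_le ω c ζ]
  · have h : (1 + ‖ζ‖) ^ 2 / 8 * (32 / (1 + ‖ζ‖)) ^ 2 = 128 := by field_simp; ring
    rw [← norm_iteratedFDeriv_fderiv, norm_iteratedFDeriv_one, h]
    linarith [norm_fderiv_fderiv_psiDenom_le ω c ζ]
  · rw [iteratedFDeriv_psiDenom_eq_zero ω c hi3, norm_zero]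
    positivity

end Denominator

theorem statement8_general (n : ℕ) (m : ℕ) :
    ∃ C : ℝ, ∀ (s : ℝ), 1 ≤ s → ∀ ω : EuclideanSpace ℝ (Fin n), ‖ω‖ = 1 →
      ∀ ξ : EuclideanSpace ℝ (Fin n),
        ‖iteratedFDeriv ℝ m
            (fun ζ : EuclideanSpace ℝ (Fin n) => (‖ζ - ω‖ ^ 2 + ‖ζ‖ ^ 2 + s ^ (-2 : ℝ))⁻¹) ξ‖
          ≤ C * (1 + ‖ξ‖) ^ (-2 - (m : ℝ)) := by
  refine ⟨8 * 32 ^ m * m ! * m !, fun s hs ω hω ξ => ?_⟩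
  have hc : 0 ≤ s ^ (-2 : ℝ) := Real.rpow_nonneg (by linarith) _
  have hlow := sq_one_add_norm_le_psiDenom ω _ hω.ge hc
  have hpos : ∀ ζ, 0 < psiDenom ω (s ^ (-2 : ℝ)) ζ := fun ζ =>
    lt_of_lt_of_le (by positivity) (hlow ζ)
  have hR : 0 < 1 + ‖ξ‖ := by positivity
  refine (norm_iteratedFDeriv_inv_le (contDiff_psiDenom ω _) hpos (by positivity) (hlow ξ)
    fun i hi _ => norm_iteratedFDeriv_psiDenom_le ω _ hω.le ξ hi).trans_eq ?_
  rw [show (-2 - m : ℝ) = -((m + 2 : ℕ) : ℝ) by push_cast; ring, Real.rpow_neg hR.le,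
    Real.rpow_natCast, div_pow]
  field_simp
  ring

/-- Uniform symbol estimates of order `-2` for the family
`ψ_{sω}(ξ) = (|ξ-ω|² + |ξ|² + s⁻²)⁻¹`, `s ≥ 1`, `ω ∈ S^{n-1}`. -/
theorem statement8 (n : ℕ) (hn : 1 ≤ n) (m : ℕ) :
    ∃ C : ℝ, ∀ (s : ℝ), 1 ≤ s → ∀ ω : EuclideanSpace ℝ (Fin n), ‖ω‖ = 1 →
      ∀ ξ : EuclideanSpace ℝ (Fin n),
        ‖iteratedFDeriv ℝ m
            (fun ζ : EuclideanSpace ℝ (Fin n) => (‖ζ - ω‖ ^ 2 + ‖ζ‖ ^ 2 + s ^ (-2 : ℝ))⁻¹) ξ‖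
          ≤ C * (1 + ‖ξ‖) ^ (-2 - (m : ℝ)) :=
  statement8_general n m
end

section
/- Let n ≥ 5 be odd and let c₀, …, c_{(n−3)/2} be given real constants. For η > 0 and r > 0 define F(η, r) := Σ_{j=0}^{(n−3)/2} c_j (ηr)^j − e^{−r√(1+η²)} Σ_{j=0}^{(n−3)/2} c_j (i r √(1+η²))^j. Then for every ℓ ∈ ℕ there is a constant C_ℓ such that for all 0 < η ≤ 1/2 and all r > 0: |∂_η^ℓ F(η, r)| ≤ C_ℓ ( r^ℓ (1 + ηr)^{(n−3)/2 − ℓ} + (1+r)^{(n−3)/2 + ℓ} e^{−r} ). In particular |∂_η^ℓ F(η, r)| ≤ C_ℓ' η^{−ℓ} (1 + ηr)^{(n−3)/2}. -/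
noncomputable section

/-- The non-oscillatory factor `F(η,r)` of the kernel of `R₀⁺(η⁴+η²)` in odd dimensions:
`F(η,r) = Σ c_j (ηr)^j − e^{−r√(1+η²)} Σ c_j (ir√(1+η²))^j`, sums over `0 ≤ j ≤ (n−3)/2`. -/
def F13 (n : ℕ) (c : ℕ → ℝ) (η r : ℝ) : ℂ :=
  (∑ j ∈ Finset.range ((n - 3) / 2 + 1), ((c j : ℝ) : ℂ) * (((η * r : ℝ)) : ℂ) ^ j) -
    Complex.exp (-((r * Real.sqrt (1 + η ^ 2) : ℝ) : ℂ)) *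
      ∑ j ∈ Finset.range ((n - 3) / 2 + 1),
        ((c j : ℝ) : ℂ) * (Complex.I * ((r * Real.sqrt (1 + η ^ 2) : ℝ) : ℂ)) ^ j

/-!
Write `m = (n-3)/2`, `s(η) = √(1+η²)`, `P(η) = Σ c_j r^j η^j` and
`G(u) = e^{-ru} Σ c_j (ir)^j u^j`, so that `F(·, r) = P - G ∘ s`. Differentiating `P` termwise,
the `j`-th term of `P^{(ℓ)}` is a multiple of `r^ℓ (ηr)^{j-ℓ} ≤ r^ℓ (1+ηr)^{m-ℓ}`. For `G ∘ s`,
Faà di Bruno's bound reduces everything to the derivatives of `s` on `[0,1]`, bounded by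
compactness, and those of `G` on `s([0,1]) ⊆ [1,2]`, which by Leibniz's rule are
`O((1+r)^{m+ℓ} e^{-r})`. The second estimate follows from the first, since
`r^ℓ (1+ηr)^{m-ℓ} ≤ η^{-ℓ} (1+ηr)^m` and `(1+r)^k e^{-r}` is bounded.
-/

open Finset
open scoped Nat

lemma Nat.descFactorial_le_factorial (j k : ℕ) : j.descFactorial k ≤ j ! := by
  rcases le_or_gt k j with h | h
  · exact Nat.factorial_mul_descFactorial h ▸ Nat.le_mul_of_pos_left _ (Nat.factorial_pos _)
  · simp [Nat.descFactorial_eq_zero_iff_lt.2 h]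

lemma pow_le_one_add_pow {r : ℝ} (hr : 0 ≤ r) {j m : ℕ} (h : j ≤ m) : r ^ j ≤ (1 + r) ^ m :=
  (pow_le_pow_left₀ hr (by linarith) j).trans (pow_le_pow_right₀ (by linarith) h)

lemma one_add_pow_mul_exp_neg_le (k : ℕ) {r : ℝ} (hr : 0 ≤ r) :
    (1 + r) ^ k * Real.exp (-r) ≤ Real.exp 1 * k ! := by
  have h := Real.pow_div_factorial_le_exp (1 + r) (by linarith) k
  rw [div_le_iff₀ (by positivity)] at h
  calc (1 + r) ^ k * Real.exp (-r) ≤ Real.exp (1 + r) * k ! * Real.exp (-r) := by gcongr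
    _ = Real.exp 1 * k ! := by rw [mul_right_comm, ← Real.exp_add]; ring_nf

lemma pow_mul_pow_sub_le {η r : ℝ} (hη : 0 ≤ η) (hr : 0 ≤ r) {ℓ j m : ℕ} (hℓj : ℓ ≤ j)
    (hjm : j ≤ m) : r ^ j * η ^ (j - ℓ) ≤ r ^ ℓ * (1 + η * r) ^ ((m : ℝ) - ℓ) := by
  have hsplit : r ^ j * η ^ (j - ℓ) = r ^ ℓ * (η * r) ^ (j - ℓ) := by
    rw [mul_pow, ← pow_sub_mul_pow r hℓj]; ring
  have hcast : (j - ℓ : ℕ) = (j : ℝ) - ℓ := by push_cast [hℓj]; ring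
  rw [hsplit]
  gcongr
  calc (η * r) ^ (j - ℓ) ≤ (1 + η * r) ^ (j - ℓ) := by gcongr; linarith
    _ = (1 + η * r) ^ ((j : ℝ) - ℓ) := by rw [← hcast, Real.rpow_natCast]
    _ ≤ (1 + η * r) ^ ((m : ℝ) - ℓ) := by
        gcongr
        nlinarith [mul_nonneg hη hr]

lemma pow_mul_one_add_mul_rpow_le {η r : ℝ} (hη : 0 < η) (hr : 0 ≤ r) (ℓ : ℕ) (a : ℝ) :
    r ^ ℓ * (1 + η * r) ^ (a - ℓ) ≤ η ^ (-(ℓ : ℝ)) * (1 + η * r) ^ a := by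
  have h1 : 0 < 1 + η * r := by positivity
  have hr' : r ^ ℓ = η ^ (-(ℓ : ℝ)) * (η * r) ^ ℓ := by
    rw [Real.rpow_neg hη.le, Real.rpow_natCast, mul_pow, inv_mul_cancel_left₀ (by positivity)]
  calc r ^ ℓ * (1 + η * r) ^ (a - ℓ)
      ≤ η ^ (-(ℓ : ℝ)) * ((1 + η * r) ^ (ℓ : ℝ) * (1 + η * r) ^ (a - ℓ)) := by
        rw [hr', mul_assoc, Real.rpow_natCast]
        gcongr
        linarith
    _ = η ^ (-(ℓ : ℝ)) * (1 + η * r) ^ a := by rw [← Real.rpow_add h1]; ring_nf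

lemma IsCompact.exists_pow_bound_iteratedFDeriv {𝕜 E F : Type*} [NontriviallyNormedField 𝕜]
    [NormedAddCommGroup E] [NormedSpace 𝕜 E] [NormedAddCommGroup F] [NormedSpace 𝕜 F]
    {f : E → F} {n : ℕ} (hf : ContDiff 𝕜 n f) {K : Set E} (hK : IsCompact K) :
    ∃ D : ℝ, 0 ≤ D ∧ ∀ i, 1 ≤ i → i ≤ n → ∀ x ∈ K, ‖iteratedFDeriv 𝕜 i f x‖ ≤ D ^ i := by
  have hb : ∀ i, ∃ b : ℝ, i ≤ n → ∀ x ∈ K, ‖iteratedFDeriv 𝕜 i f x‖ ≤ b := fun i => by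
    by_cases hi : i ≤ n
    · obtain ⟨b, hb⟩ := hK.exists_bound_of_continuousOn
        (hf.continuous_iteratedFDeriv (by exact_mod_cast hi)).continuousOn
      exact ⟨b, fun _ => hb⟩
    · exact ⟨0, fun h => absurd h hi⟩
  choose b hb using hb
  have hb0 : 0 ≤ ∑ i ∈ range (n + 1), |b i| := sum_nonneg fun i _ => abs_nonneg (b i)
  refine ⟨1 + ∑ i ∈ range (n + 1), |b i|, by linarith, fun i hi1 hin x hx => ?_⟩
  have hsum : |b i| ≤ ∑ i ∈ range (n + 1), |b i| :=
    single_le_sum (fun i _ => abs_nonneg (b i)) (mem_range.2 (by omega))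
  calc ‖iteratedFDeriv 𝕜 i f x‖ ≤ |b i| := (hb i hin x hx).trans (le_abs_self _)
    _ ≤ 1 + ∑ i ∈ range (n + 1), |b i| := by linarith
    _ ≤ (1 + ∑ i ∈ range (n + 1), |b i|) ^ i := le_self_pow₀ (by linarith) (by omega)

@[fun_prop]
lemma Complex.contDiff_ofReal {N : WithTop ℕ∞} : ContDiff ℝ N ((↑) : ℝ → ℂ) :=
  Complex.ofRealCLM.contDiff

lemma iteratedDeriv_comp_ofReal {f : ℂ → ℂ} (hf : ContDiff ℂ ⊤ f) (n : ℕ) (x : ℝ) :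
    iteratedDeriv n (fun t : ℝ => f t) x = iteratedDeriv n f x := by
  induction n generalizing x with
  | zero => simp
  | succ n ih =>
    rw [iteratedDeriv_succ, funext ih, iteratedDeriv_succ]
    exact ((hf.differentiable_iteratedDeriv n (by simp)) x).hasDerivAt.comp_ofReal.deriv

lemma iteratedDeriv_sum_mul_pow {𝕜 : Type*} [NontriviallyNormedField 𝕜]
    (s : Finset ℕ) (a : ℕ → 𝕜) (k : ℕ) (x : 𝕜) :
    iteratedDeriv k (fun z => ∑ j ∈ s, a j * z ^ j) x
      = ∑ j ∈ s, a j * j.descFactorial k * x ^ (j - k) := by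
  rw [iteratedDeriv_fun_sum fun j _ => by fun_prop]
  refine sum_congr rfl fun j _ => ?_
  rw [iteratedDeriv_const_mul _ (by fun_prop), iteratedDeriv_pow, mul_assoc]

lemma norm_iteratedDeriv_sum_mul_ofReal_pow_le (s : Finset ℕ) (a : ℕ → ℂ) (k : ℕ) (x : ℝ) :
    ‖iteratedDeriv k (fun t : ℝ => ∑ j ∈ s, a j * (t : ℂ) ^ j) x‖
      ≤ ∑ j ∈ s, ‖a j‖ * j.descFactorial k * |x| ^ (j - k) := by
  rw [iteratedDeriv_comp_ofReal (f := fun z => ∑ j ∈ s, a j * z ^ j) (by fun_prop),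
    iteratedDeriv_sum_mul_pow]
  refine (norm_sum_le _ _).trans (le_of_eq (sum_congr rfl fun j _ => ?_))
  simp

lemma iteratedDeriv_cexp_const_mul_ofReal (a : ℂ) (n : ℕ) (u : ℝ) :
    iteratedDeriv n (fun t : ℝ => Complex.exp (a * t)) u = a ^ n * Complex.exp (a * u) := by
  rw [iteratedDeriv_comp_ofReal (f := fun z => Complex.exp (a * z)) (by fun_prop),
    iteratedDeriv_cexp_const_mul]

def polyPart (c : ℕ → ℝ) (m : ℕ) (r t : ℝ) : ℂ :=
  ∑ j ∈ range (m + 1), (c j * (r : ℂ) ^ j) * (t : ℂ) ^ j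

lemma norm_iteratedDeriv_polyPart_le (c : ℕ → ℝ) (m ℓ : ℕ) {η r : ℝ} (hη : 0 < η)
    (hr : 0 < r) :
    ‖iteratedDeriv ℓ (polyPart c m r) η‖
      ≤ (∑ j ∈ range (m + 1), |c j| * j.descFactorial ℓ)
        * (r ^ ℓ * (1 + η * r) ^ ((m : ℝ) - ℓ)) := by
  refine (norm_iteratedDeriv_sum_mul_ofReal_pow_le _ _ _ _).trans ?_
  rw [sum_mul]
  refine sum_le_sum fun j hj => ?_
  rcases lt_or_ge j ℓ with hjℓ | hℓj
  · simp only [Nat.descFactorial_eq_zero_iff_lt.2 hjℓ, Nat.cast_zero, mul_zero, zero_mul]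
    positivity
  · have hjm : j ≤ m := Nat.lt_succ_iff.1 (mem_range.1 hj)
    have := pow_mul_pow_sub_le hη.le hr.le hℓj hjm
    simp only [norm_mul, norm_pow, Complex.norm_real, Real.norm_eq_abs, abs_of_pos hr,
      abs_of_pos hη]
    calc |c j| * r ^ j * (j.descFactorial ℓ) * η ^ (j - ℓ)
        = |c j| * j.descFactorial ℓ * (r ^ j * η ^ (j - ℓ)) := by ring
      _ ≤ _ := by gcongr

lemma norm_iteratedFDeriv_cexp_neg_mul_le {r u : ℝ} (hr : 0 ≤ r) (hu : 1 ≤ u) {k ℓ : ℕ}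
    (hk : k ≤ ℓ) :
    ‖iteratedFDeriv ℝ k (fun t : ℝ => Complex.exp (-r * t)) u‖
      ≤ (1 + r) ^ ℓ * Real.exp (-r) := by
  rw [norm_iteratedFDeriv_eq_norm_iteratedDeriv, iteratedDeriv_cexp_const_mul_ofReal, norm_mul,
    norm_pow, Complex.norm_exp]
  have hre : (-(r : ℂ) * u).re = -(r * u) := by simp
  rw [hre, norm_neg, Complex.norm_real, Real.norm_eq_abs, abs_of_nonneg hr]
  gcongr
  · exact pow_le_one_add_pow hr hk
  · nlinarith

lemma norm_iteratedFDeriv_expPart_poly_le (c : ℕ → ℝ) (m k : ℕ) {r u : ℝ} (hr : 0 ≤ r)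
    (hu1 : 1 ≤ u) (hu2 : u ≤ 2) :
    ‖iteratedFDeriv ℝ k
        (fun t : ℝ => ∑ j ∈ range (m + 1), (c j * (Complex.I * r) ^ j) * (t : ℂ) ^ j) u‖
      ≤ (∑ j ∈ range (m + 1), |c j| * j ! * 2 ^ j) * (1 + r) ^ m := by
  rw [norm_iteratedFDeriv_eq_norm_iteratedDeriv]
  refine (norm_iteratedDeriv_sum_mul_ofReal_pow_le _ _ _ _).trans ?_
  rw [sum_mul]
  refine sum_le_sum fun j hj => ?_
  have hjm : j ≤ m := Nat.lt_succ_iff.1 (mem_range.1 hj)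
  simp only [norm_mul, norm_pow, Complex.norm_I, one_mul, Complex.norm_real, Real.norm_eq_abs,
    abs_of_nonneg hr, abs_of_pos (by linarith : 0 < u)]
  have hdesc : (j.descFactorial k : ℝ) ≤ j ! := mod_cast Nat.descFactorial_le_factorial j k
  have hu : u ^ (j - k) ≤ 2 ^ j := (pow_le_pow_left₀ (by linarith) hu2 _).trans
    (pow_le_pow_right₀ one_le_two (Nat.sub_le j k))
  calc |c j| * r ^ j * j.descFactorial k * u ^ (j - k)
      ≤ |c j| * (1 + r) ^ m * j ! * 2 ^ j := by
        gcongr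
        exact pow_le_one_add_pow hr hjm
    _ = |c j| * j ! * 2 ^ j * (1 + r) ^ m := by ring

def expPart (c : ℕ → ℝ) (m : ℕ) (r u : ℝ) : ℂ :=
  Complex.exp (-r * u) * ∑ j ∈ range (m + 1), (c j * (Complex.I * r) ^ j) * (u : ℂ) ^ j

lemma contDiff_expPart (c : ℕ → ℝ) (m : ℕ) (r : ℝ) {N : WithTop ℕ∞} :
    ContDiff ℝ N (expPart c m r) := by
  unfold expPart
  fun_prop

lemma norm_iteratedFDeriv_expPart_le (c : ℕ → ℝ) (m : ℕ) {r u : ℝ} (hr : 0 ≤ r) (hu1 : 1 ≤ u)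
    (hu2 : u ≤ 2) {i ℓ : ℕ} (hi : i ≤ ℓ) :
    ‖iteratedFDeriv ℝ i (expPart c m r) u‖
      ≤ 2 ^ ℓ * (∑ j ∈ range (m + 1), |c j| * j ! * 2 ^ j)
        * ((1 + r) ^ (m + ℓ) * Real.exp (-r)) := by
  set K := ∑ j ∈ range (m + 1), |c j| * j ! * 2 ^ j
  have hK : 0 ≤ K := sum_nonneg fun j _ => by positivity
  refine (norm_iteratedFDeriv_mul_le (by fun_prop) (by fun_prop) u le_rfl).trans ?_
  have hterm : ∀ k ∈ range (i + 1), (i.choose k : ℝ)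
        * ‖iteratedFDeriv ℝ k (fun t : ℝ => Complex.exp (-r * t)) u‖
        * ‖iteratedFDeriv ℝ (i - k) (fun t : ℝ =>
            ∑ j ∈ range (m + 1), (c j * (Complex.I * r) ^ j) * (t : ℂ) ^ j) u‖
      ≤ i.choose k * ((1 + r) ^ ℓ * Real.exp (-r) * (K * (1 + r) ^ m)) := fun k hk => by
    rw [mul_assoc]
    gcongr
    · exact norm_iteratedFDeriv_cexp_neg_mul_le hr hu1 (by linarith [mem_range.1 hk])
    · exact norm_iteratedFDeriv_expPart_poly_le c m (i - k) hr hu1 hu2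
  refine (sum_le_sum hterm).trans ?_
  rw [← sum_mul, ← Nat.cast_sum, Nat.sum_range_choose, Nat.cast_pow, Nat.cast_ofNat]
  calc (2 : ℝ) ^ i * ((1 + r) ^ ℓ * Real.exp (-r) * (K * (1 + r) ^ m))
      ≤ 2 ^ ℓ * ((1 + r) ^ ℓ * Real.exp (-r) * (K * (1 + r) ^ m)) := by
        gcongr
        exact one_le_two
    _ = 2 ^ ℓ * K * ((1 + r) ^ (m + ℓ) * Real.exp (-r)) := by ring

lemma F13_eq_sub_comp (n : ℕ) (c : ℕ → ℝ) (r : ℝ) :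
    (fun t => F13 n c t r)
      = polyPart c ((n - 3) / 2) r - expPart c ((n - 3) / 2) r ∘ fun t => √(1 + t ^ 2) := by
  funext t
  simp only [F13, polyPart, expPart, Pi.sub_apply, Function.comp_apply]
  push_cast
  congr 1
  · exact sum_congr rfl fun j _ => by ring
  · rw [neg_mul]
    exact congrArg _ (sum_congr rfl fun j _ => by ring)

lemma exists_norm_iteratedDeriv_F13_le (n : ℕ) (c : ℕ → ℝ) (ℓ : ℕ) :
    ∃ A B : ℝ, 0 ≤ A ∧ 0 ≤ B ∧ ∀ η r : ℝ, 0 < η → η ≤ 1 → 0 < r →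
      ‖iteratedDeriv ℓ (fun t => F13 n c t r) η‖
        ≤ A * (r ^ ℓ * (1 + η * r) ^ ((((n - 3) / 2 : ℕ) : ℝ) - ℓ))
          + B * ((1 + r) ^ ((n - 3) / 2 + ℓ) * Real.exp (-r)) := by
  set m := (n - 3) / 2
  have hsqrt : ContDiff ℝ ℓ fun t : ℝ => √(1 + t ^ 2) :=
    ContDiff.sqrt (by fun_prop) fun t => by positivity
  obtain ⟨D, hD0, hD⟩ :=
    isCompact_Icc.exists_pow_bound_iteratedFDeriv hsqrt (K := Set.Icc (0 : ℝ) 1)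
  set K := ∑ j ∈ range (m + 1), |c j| * j ! * 2 ^ j
  refine ⟨∑ j ∈ range (m + 1), |c j| * j.descFactorial ℓ, ℓ ! * (2 ^ ℓ * K) * D ^ ℓ,
    sum_nonneg fun j _ => by positivity, ?_, fun η r hη hη1 hr => ?_⟩
  · positivity
  have hu1 : 1 ≤ √(1 + η ^ 2) := Real.le_sqrt_of_sq_le (by nlinarith)
  have hu2 : √(1 + η ^ 2) ≤ 2 := Real.sqrt_le_iff.2 ⟨zero_le_two, by nlinarith⟩
  rw [F13_eq_sub_comp, iteratedDeriv_sub (by unfold polyPart; fun_prop)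
    ((contDiff_expPart c m r).comp hsqrt).contDiffAt]
  refine (norm_sub_le _ _).trans (add_le_add (norm_iteratedDeriv_polyPart_le c m ℓ hη hr) ?_)
  rw [← norm_iteratedFDeriv_eq_norm_iteratedDeriv]
  refine (norm_iteratedFDeriv_comp_le (contDiff_expPart c m r) hsqrt le_rfl η
    (fun i hi => norm_iteratedFDeriv_expPart_le c m hr.le hu1 hu2 hi)
    (fun i hi1 hi2 => hD i hi1 hi2 η ⟨hη.le, hη1⟩)).trans (le_of_eq ?_)
  ring

/-- Derivative bounds for `F(η,r)` in odd dimensions `n ≥ 5`, uniformly for `0 < η ≤ 1/2`. -/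
theorem statement13 (n : ℕ) (hn : 5 ≤ n) (hodd : Odd n) (c : ℕ → ℝ) (ℓ : ℕ) :
    ∃ C C' : ℝ, 0 < C ∧ 0 < C' ∧ ∀ η r : ℝ, 0 < η → η ≤ 1 / 2 → 0 < r →
      ‖iteratedDeriv ℓ (fun t : ℝ => F13 n c t r) η‖
          ≤ C * (r ^ (ℓ : ℝ) * (1 + η * r) ^ (((n : ℝ) - 3) / 2 - ℓ)
              + (1 + r) ^ (((n : ℝ) - 3) / 2 + ℓ) * Real.exp (-r)) ∧
      ‖iteratedDeriv ℓ (fun t : ℝ => F13 n c t r) η‖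
          ≤ C' * η ^ (-(ℓ : ℝ)) * (1 + η * r) ^ (((n : ℝ) - 3) / 2) := by
  obtain ⟨A, B, hA, hB, hF⟩ := exists_norm_iteratedDeriv_F13_le n c ℓ
  set m := (n - 3) / 2
  have hm : ((n : ℝ) - 3) / 2 = m := by
    obtain ⟨k, rfl⟩ := hodd
    rw [show m = k - 1 by omega, Nat.cast_sub (by omega)]
    push_cast
    ring
  set M := Real.exp 1 * (m + ℓ)!
  refine ⟨A + B + 1, (A + B + 1) * (1 + M), by positivity, by positivity,
    fun η r hη hη2 hr => ?_⟩
  rw [hm, Real.rpow_natCast, ← Nat.cast_add, Real.rpow_natCast]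
  set X := r ^ ℓ * (1 + η * r) ^ ((m : ℝ) - ℓ)
  set Y := (1 + r) ^ (m + ℓ) * Real.exp (-r)
  set Z := η ^ (-(ℓ : ℝ)) * (1 + η * r) ^ (m : ℝ)
  have hX : 0 ≤ X := by positivity
  have hY : 0 ≤ Y := by positivity
  have hXZ : X ≤ Z := pow_mul_one_add_mul_rpow_le hη hr.le ℓ m
  have hYM : Y ≤ M := one_add_pow_mul_exp_neg_le _ hr.le
  have hZ : 1 ≤ Z := one_le_mul_of_one_le_of_one_le
    (Real.one_le_rpow_of_pos_of_le_one_of_nonpos hη (by linarith) (by simp))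
    (Real.one_le_rpow (le_add_of_nonneg_right (by positivity)) (by positivity))
  have hfirst : ‖iteratedDeriv ℓ (fun t => F13 n c t r) η‖ ≤ (A + B + 1) * (X + Y) :=
    (hF η r hη (by linarith) hr).trans (by nlinarith)
  refine ⟨hfirst, hfirst.trans ?_⟩
  calc (A + B + 1) * (X + Y) ≤ (A + B + 1) * ((1 + M) * Z) := by gcongr; nlinarith
    _ = (A + B + 1) * (1 + M) * η ^ (-(ℓ : ℝ)) * (1 + η * r) ^ (m : ℝ) := by ring
end
end
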